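/- Let ν ≥ 1 and let P, R, P′, R′ be Hermitian ν×ν complex matrices. Set C = ∑_{j,k=1}^{ν} |P_{jk} − P′_{jk}| + ∑_{j,k=1}^{ν} |R_{jk} − R′_{jk}|. Then both of the following hold: (a) |λ₁(P) − λ₁(P′)| + |λ_ν(R) − λ_ν(R′)| + ∑_{n=1}^{ν−1} | (λ_{n+1}(P) − λ_n(R)) − (λ_{n+1}(P′) − λ_n(R′)) | ≤ 2C; (b) ∑_{n=1}^{ν} | (λ_n(R) − λ_n(P)) − (λ_n(R′) − λ_n(P′)) | ≤ 2C. -/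

import Mathlib

open Matrix

/-- The eigenvalues of a Hermitian matrix, listed in increasing order
(counted with multiplicity). -/
noncomputable def eigs {ν : ℕ} {A : Matrix (Fin ν) (Fin ν) ℂ} (hA : A.IsHermitian) :
    Fin ν → ℝ :=
  hA.eigenvalues ∘ ⇑(Tuple.sort hA.eigenvalues)

open Finset
open scoped ComplexOrder


section pieces
variable {ν : ℕ}
local notation "E" => EuclideanSpace ℂ (Fin ν)

lemma eigs_mono {A : Matrix (Fin ν) (Fin ν) ℂ} (hA : A.IsHermitian) : Monotone (eigs hA) :=
  Tuple.monotone_sort hA.eigenvalues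

noncomputable def sBasis {A : Matrix (Fin ν) (Fin ν) ℂ} (hA : A.IsHermitian) :
    OrthonormalBasis (Fin ν) ℂ E :=
  hA.eigenvectorBasis.reindex (Tuple.sort hA.eigenvalues).symm

lemma mulVec_sBasis {A : Matrix (Fin ν) (Fin ν) ℂ} (hA : A.IsHermitian) (i : Fin ν) :
    A *ᵥ ⇑(sBasis hA i) = eigs hA i • ⇑(sBasis hA i) := by
  simpa [sBasis, eigs] using hA.mulVec_eigenvectorBasis (Tuple.sort hA.eigenvalues i)

lemma tEL_sBasis {A : Matrix (Fin ν) (Fin ν) ℂ} (hA : A.IsHermitian) (i : Fin ν) :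
    toEuclideanLin A (sBasis hA i) = ((eigs hA i : ℝ) : ℂ) • sBasis hA i := by
  have h := mulVec_sBasis hA i
  apply PiLp.ext
  intro j
  have := congrFun h j
  simp only [toEuclideanLin_apply]
  simpa [Complex.real_smul] using this

lemma rayleigh_sum (b : OrthonormalBasis (Fin ν) ℂ E) (T : E →ₗ[ℂ] E) (μ : Fin ν → ℝ)
    (hT : ∀ i, T (b i) = ((μ i : ℝ) : ℂ) • b i) (x : E) :
    (inner ℂ x (T x) : ℂ) = ((∑ i, μ i * Complex.normSq (b.repr x i) : ℝ) : ℂ) := by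
  have hTx : T x = ∑ i, (b.repr x i * (μ i : ℂ)) • b i := by
    conv_lhs => rw [← b.sum_repr x]
    rw [map_sum]
    exact Finset.sum_congr rfl fun i _ => by rw [_root_.map_smul, hT, smul_smul]
  rw [hTx, inner_sum]
  push_cast
  refine Finset.sum_congr rfl fun i _ => ?_
  rw [inner_smul_right]
  have h1 : (inner ℂ x (b i) : ℂ) = (starRingEnd ℂ) (b.repr x i) := by
    rw [b.repr_apply_apply]
    exact (inner_conj_symm x (b i)).symm
  rw [h1, mul_right_comm, Complex.mul_conj]
  ring

lemma repr_eq_zero_of_mem_span (b : OrthonormalBasis (Fin ν) ℂ E) (s : Set (Fin ν)) {x : E}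
    (hx : x ∈ Submodule.span ℂ (⇑b '' s)) {i : Fin ν} (hi : i ∉ s) : b.repr x i = 0 := by
  rw [b.repr_apply_apply]
  induction hx using Submodule.span_induction with
  | mem y hy =>
    obtain ⟨j, hj, rfl⟩ := hy
    exact b.orthonormal.2 (fun h : i = j => hi (h ▸ hj))
  | zero => exact inner_zero_right _
  | add y z _ _ hy hz => rw [inner_add_right, hy, hz, add_zero]
  | smul a y _ hy => rw [inner_smul_right, hy, mul_zero]

lemma exists_ne_zero_mem_inf (W U : Submodule ℂ E)
    (h : ν < Module.finrank ℂ W + Module.finrank ℂ U) :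
    ∃ x : E, x ≠ 0 ∧ x ∈ W ⊓ U := by
  have hsum := Submodule.finrank_sup_add_finrank_inf_eq W U
  have hle : Module.finrank ℂ ↥(W ⊔ U) ≤ ν := by
    simpa using Submodule.finrank_le (W ⊔ U)
  have hpos : 0 < Module.finrank ℂ ↥(W ⊓ U) := by omega
  obtain ⟨⟨x, hxWU⟩, hx0⟩ := Module.finrank_pos_iff_exists_ne_zero.mp hpos
  exact ⟨x, by simpa [Submodule.mk_eq_zero] using hx0, hxWU⟩

/-- Weyl monotonicity: if `B - A` is PSD then the sorted eigenvalues dominate. -/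
lemma eigs_le_eigs {A B : Matrix (Fin ν) (Fin ν) ℂ} (hA : A.IsHermitian) (hB : B.IsHermitian)
    (hQ : (B - A).PosSemidef) (k : Fin ν) : eigs hA k ≤ eigs hB k := by
  classical
  set v := sBasis hA with hv
  set w := sBasis hB with hw
  -- index maps
  have hkν : (k : ℕ) < ν := k.2
  set fIdx : Fin ((k : ℕ) + 1) → Fin ν := fun j => ⟨(j : ℕ), by omega⟩ with hfIdx
  set gIdx : Fin (ν - (k : ℕ)) → Fin ν := fun j => ⟨(k : ℕ) + (j : ℕ), by omega⟩ with hgIdx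
  have hfInj : Function.Injective fIdx := by
    intro a b hab
    simpa [hfIdx, Fin.ext_iff] using hab
  have hgInj : Function.Injective gIdx := by
    intro a b hab
    simp only [hgIdx, Fin.ext_iff] at hab ⊢
    omega
  set W : Submodule ℂ E := Submodule.span ℂ (Set.range (⇑w ∘ fIdx)) with hW
  set U : Submodule ℂ E := Submodule.span ℂ (Set.range (⇑v ∘ gIdx)) with hU
  have hWrank : Module.finrank ℂ W = (k : ℕ) + 1 := by
    rw [hW, finrank_span_eq_card ((w.orthonormal.comp fIdx hfInj).linearIndependent)]
    simp
  have hUrank : Module.finrank ℂ U = ν - (k : ℕ) := by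
    rw [hU, finrank_span_eq_card ((v.orthonormal.comp gIdx hgInj).linearIndependent)]
    simp
  obtain ⟨x, hx0, hxWU⟩ : ∃ x : E, x ≠ 0 ∧ x ∈ W ⊓ U := by
    apply exists_ne_zero_mem_inf
    rw [hWrank, hUrank]; omega
  rw [Submodule.mem_inf] at hxWU
  obtain ⟨hxW, hxU⟩ := hxWU
  set c : Fin ν → ℂ := fun i => v.repr x i with hc
  set d : Fin ν → ℂ := fun i => w.repr x i with hd
  have hcz : ∀ i : Fin ν, (i : ℕ) < (k : ℕ) → c i = 0 := by
    intro i hi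
    apply repr_eq_zero_of_mem_span v (Set.range gIdx)
    · rwa [← Set.range_comp]
    · rintro ⟨j, rfl⟩
      simp only [hgIdx] at hi
      omega
  have hdz : ∀ i : Fin ν, (k : ℕ) < (i : ℕ) → d i = 0 := by
    intro i hi
    apply repr_eq_zero_of_mem_span w (Set.range fIdx)
    · rwa [← Set.range_comp]
    · rintro ⟨j, rfl⟩
      simp only [hfIdx] at hi
      omega
  -- quadratic forms
  have hQA := rayleigh_sum v (toEuclideanLin A) (eigs hA) (tEL_sBasis hA) x
  have hQB := rayleigh_sum w (toEuclideanLin B) (eigs hB) (tEL_sBasis hB) x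
  have hID := rayleigh_sum v (LinearMap.id) (fun _ => (1 : ℝ)) (by simp) x
  have hID' := rayleigh_sum w (LinearMap.id) (fun _ => (1 : ℝ)) (by simp) x
  simp only [LinearMap.id_coe, id_eq] at hID hID'
  have hN : (∑ i, Complex.normSq (c i)) = (∑ i, Complex.normSq (d i)) := by
    have h2 := Complex.ofReal_inj.mp (hID.symm.trans hID')
    simpa using h2
  set N : ℝ := ∑ i, Complex.normSq (c i) with hNdef
  have hNpos : 0 < N := by
    have hex : ∃ i, c i ≠ 0 := by
      by_contra hcon
      push_neg at hcon
      apply hx0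
      have := v.sum_repr x
      rw [← this]
      simp only [← hc]
      simp [hcon]
    obtain ⟨i0, hi0⟩ := hex
    exact Finset.sum_pos' (fun i _ => Complex.normSq_nonneg _)
      ⟨i0, Finset.mem_univ _, Complex.normSq_pos.mpr hi0⟩
  have hlow : eigs hA k * N ≤ ∑ i, eigs hA i * Complex.normSq (c i) := by
    rw [hNdef, Finset.mul_sum]
    refine Finset.sum_le_sum fun i _ => ?_
    by_cases h : (i : ℕ) < (k : ℕ)
    · rw [hcz i h]
      simp
    · exact mul_le_mul_of_nonneg_right (eigs_mono hA (by rw [Fin.le_def]; omega))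
        (Complex.normSq_nonneg _)
  have hup : (∑ i, eigs hB i * Complex.normSq (d i)) ≤ eigs hB k * N := by
    rw [hN, Finset.mul_sum]
    refine Finset.sum_le_sum fun i _ => ?_
    by_cases h : (k : ℕ) < (i : ℕ)
    · rw [hdz i h]
      simp
    · exact mul_le_mul_of_nonneg_right (eigs_mono hB (by rw [Fin.le_def]; omega))
        (Complex.normSq_nonneg _)
  have hposQ : 0 ≤ (inner ℂ x (toEuclideanLin (B - A) x) : ℂ) := by
    have h := hQ.dotProduct_mulVec_nonneg ((WithLp.equiv 2 (Fin ν → ℂ)) x)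
    rw [EuclideanSpace.inner_eq_star_dotProduct, ofLp_toEuclideanLin_apply, dotProduct_comm]
    exact h
  have hsplit : (inner ℂ x (toEuclideanLin B x) : ℂ) =
      inner ℂ x (toEuclideanLin A x) + inner ℂ x (toEuclideanLin (B - A) x) := by
    rw [← inner_add_right]
    congr 1
    rw [map_sub]
    simp
  have hcmp : ((∑ i, eigs hA i * Complex.normSq (c i) : ℝ) : ℂ) ≤
      ((∑ i, eigs hB i * Complex.normSq (d i) : ℝ) : ℂ) := by
    rw [← hQA, ← hQB, hsplit]
    exact le_add_of_nonneg_right hposQ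
  have hcmp' := Complex.real_le_real.mp hcmp
  have : eigs hA k * N ≤ eigs hB k * N := le_trans hlow (le_trans hcmp' hup)
  exact le_of_mul_le_mul_right this hNpos

end pieces


section pieces2
variable {ν : ℕ}

lemma trace_VDV (V : Matrix (Fin ν) (Fin ν) ℂ) (hV : star V * V = 1) (d : Fin ν → ℂ) :
    (V * diagonal d * star V).trace = ∑ i, d i := by
  rw [Matrix.trace_mul_cycle, hV, Matrix.one_mul, Matrix.trace_diagonal]

lemma star_mul_self_eigenvectorUnitary {A : Matrix (Fin ν) (Fin ν) ℂ} (hA : A.IsHermitian) :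
    star (hA.eigenvectorUnitary : Matrix (Fin ν) (Fin ν) ℂ) *
      (hA.eigenvectorUnitary : Matrix (Fin ν) (Fin ν) ℂ) = 1 :=
  hA.eigenvectorUnitary.2.1

lemma mul_star_self_eigenvectorUnitary {A : Matrix (Fin ν) (Fin ν) ℂ} (hA : A.IsHermitian) :
    (hA.eigenvectorUnitary : Matrix (Fin ν) (Fin ν) ℂ) *
      star (hA.eigenvectorUnitary : Matrix (Fin ν) (Fin ν) ℂ) = 1 :=
  hA.eigenvectorUnitary.2.2

lemma trace_re_eq_sum_eigenvalues {A : Matrix (Fin ν) (Fin ν) ℂ} (hA : A.IsHermitian) :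
    A.trace = ((∑ i, hA.eigenvalues i : ℝ) : ℂ) := by
  conv_lhs => rw [hA.spectral_theorem, Unitary.conjStarAlgAut_apply]
  rw [trace_VDV _ (star_mul_self_eigenvectorUnitary hA)]
  push_cast
  rfl

lemma sum_eigs_eq {A : Matrix (Fin ν) (Fin ν) ℂ} (hA : A.IsHermitian) :
    (∑ k, eigs hA k) = ∑ i, hA.eigenvalues i :=
  Equiv.sum_comp (Tuple.sort hA.eigenvalues) hA.eigenvalues

/-- Entrywise bound for `V * diagonal c * Vᴴ` with `|c| ≤ 1` and `V` unitary. -/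
lemma entry_bound (V : Matrix (Fin ν) (Fin ν) ℂ) (hV : V * star V = 1) (c : Fin ν → ℝ)
    (hc : ∀ i, |c i| ≤ 1) (j k : Fin ν) :
    ‖(V * diagonal (fun i => ((c i : ℝ) : ℂ)) * star V) j k‖ ≤ 1 := by
  have hrow : ∀ l : Fin ν, (∑ i, ‖V l i‖ ^ 2) = 1 := by
    intro l
    have h1 : (V * star V) l l = 1 := by rw [hV]; simp
    rw [Matrix.mul_apply] at h1
    have h2 : ∀ i, V l i * star V i l = ((‖V l i‖ ^ 2 : ℝ) : ℂ) := by
      intro i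
      rw [Matrix.star_apply, Complex.sq_norm, ← Complex.mul_conj]
      rfl
    rw [Finset.sum_congr rfl fun i _ => h2 i] at h1
    exact_mod_cast (by push_cast at h1 ⊢; exact h1 : ((∑ i, ‖V l i‖ ^ 2 : ℝ) : ℂ) = 1)
  have hentry : (V * diagonal (fun i => ((c i : ℝ) : ℂ)) * star V) j k =
      ∑ i, V j i * (c i : ℂ) * (starRingEnd ℂ) (V k i) := by
    rw [Matrix.mul_apply]
    refine Finset.sum_congr rfl fun i _ => ?_
    rw [Matrix.mul_diagonal, Matrix.star_apply]
    rfl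
  rw [hentry]
  calc ‖∑ i, V j i * (c i : ℂ) * (starRingEnd ℂ) (V k i)‖
      ≤ ∑ i, ‖V j i * (c i : ℂ) * (starRingEnd ℂ) (V k i)‖ := by
        exact norm_sum_le _ _
    _ ≤ ∑ i, ‖V j i‖ * ‖V k i‖ := by
        refine Finset.sum_le_sum fun i _ => ?_
        rw [norm_mul, norm_mul]
        have : ‖(c i : ℂ)‖ ≤ 1 := by
          rw [Complex.norm_real, Real.norm_eq_abs]; exact hc i
        have hk : ‖(starRingEnd ℂ) (V k i)‖ = ‖V k i‖ := by
          simp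
        rw [hk]
        nlinarith [mul_nonneg (norm_nonneg (V j i)) (norm_nonneg (V k i)), norm_nonneg ((c i : ℂ))]
    _ ≤ 1 := by
        have hcs := Finset.sum_mul_sq_le_sq_mul_sq Finset.univ
          (fun i => ‖V j i‖) (fun i => ‖V k i‖)
        rw [hrow j, hrow k, one_mul] at hcs
        have hnn : 0 ≤ ∑ i, ‖V j i‖ * ‖V k i‖ :=
          Finset.sum_nonneg fun i _ => mul_nonneg (norm_nonneg _) (norm_nonneg _)
        nlinarith

/-- trace-norm ≤ entrywise ℓ¹ -/
lemma sum_abs_eigenvalues_le {M : Matrix (Fin ν) (Fin ν) ℂ} (hM : M.IsHermitian) :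
    (∑ i, |hM.eigenvalues i|) ≤ ∑ j, ∑ k, ‖M j k‖ := by
  classical
  set V : Matrix (Fin ν) (Fin ν) ℂ := (hM.eigenvectorUnitary : Matrix (Fin ν) (Fin ν) ℂ) with hVdef
  set lam := hM.eigenvalues with hlam
  set c : Fin ν → ℝ := fun i => if 0 ≤ lam i then 1 else -1 with hcdef
  set S : Matrix (Fin ν) (Fin ν) ℂ := V * diagonal (fun i => ((c i : ℝ) : ℂ)) * star V with hSdef
  have hcabs : ∀ i, |c i| ≤ 1 := by
    intro i
    by_cases h : 0 ≤ lam i <;> simp [hcdef, h]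
  have hSM : S * M = V * diagonal (fun i => ((c i * lam i : ℝ) : ℂ)) * star V := by
    conv_lhs => rw [hM.spectral_theorem, Unitary.conjStarAlgAut_apply]
    rw [hSdef]
    have h1 : V * diagonal (fun i => ((c i : ℝ) : ℂ)) * star V *
        (V * diagonal (RCLike.ofReal ∘ lam) * star V) =
        V * (diagonal (fun i => ((c i : ℝ) : ℂ)) * (star V * V) *
          diagonal (RCLike.ofReal ∘ lam)) * star V := by
      simp only [Matrix.mul_assoc]
    rw [h1, star_mul_self_eigenvectorUnitary hM, Matrix.mul_one, Matrix.diagonal_mul_diagonal]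
    congr 1
    congr 1
    funext i
    push_cast
    rfl
  have htr : (S * M).trace = ((∑ i, |lam i| : ℝ) : ℂ) := by
    rw [hSM, trace_VDV _ (star_mul_self_eigenvectorUnitary hM)]
    push_cast
    refine Finset.sum_congr rfl fun i _ => ?_
    by_cases h : 0 ≤ lam i
    · simp [hcdef, h, abs_of_nonneg h]
    · have hlt := lt_of_not_ge h
      rw [abs_of_neg hlt]
      simp only [hcdef, if_neg h]
      push_cast
      ring
  have habs : (∑ i, |lam i|) ≤ ‖(S * M).trace‖ := by
    rw [htr, Complex.norm_real, Real.norm_eq_abs]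
    exact le_abs_self _
  refine le_trans habs ?_
  unfold Matrix.trace
  calc ‖∑ j, (S * M) j j‖
      ≤ ∑ j, ‖(S * M) j j‖ := norm_sum_le _ _
    _ ≤ ∑ j, ∑ k, ‖S j k‖ * ‖M k j‖ := by
        refine Finset.sum_le_sum fun j _ => ?_
        rw [Matrix.mul_apply]
        refine le_trans (norm_sum_le _ _) ?_
        exact Finset.sum_le_sum fun k _ => by rw [norm_mul]
    _ ≤ ∑ j, ∑ k, ‖M k j‖ := by
        refine Finset.sum_le_sum fun j _ => Finset.sum_le_sum fun k _ => ?_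
        have h1 := entry_bound V (mul_star_self_eigenvectorUnitary hM) c hcabs j k
        nlinarith [norm_nonneg (M k j), norm_nonneg (S j k)]
    _ = ∑ j, ∑ k, ‖M j k‖ := Finset.sum_comm
end pieces2

section keypart
variable {ν : ℕ}

lemma eigs_congr {A B : Matrix (Fin ν) (Fin ν) ℂ} (h : A = B) (hA : A.IsHermitian)
    (hB : B.IsHermitian) : eigs hA = eigs hB := by subst h; rfl


/-- KEY: ℓ¹ stability of sorted eigenvalues. -/
lemma key {A B : Matrix (Fin ν) (Fin ν) ℂ} (hA : A.IsHermitian) (hB : B.IsHermitian) :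
    (∑ k, |eigs hA k - eigs hB k|) ≤ ∑ j, ∑ k, ‖A j k - B j k‖ := by
  classical
  have hM : (A - B).IsHermitian := hA.sub hB
  set M : Matrix (Fin ν) (Fin ν) ℂ := A - B with hMdef
  set lam := hM.eigenvalues with hlam
  set V : Matrix (Fin ν) (Fin ν) ℂ := (hM.eigenvectorUnitary : Matrix (Fin ν) (Fin ν) ℂ)
    with hVdef
  set Mp : Matrix (Fin ν) (Fin ν) ℂ :=
    V * diagonal (fun i => ((max (lam i) 0 : ℝ) : ℂ)) * star V with hMp
  set Mm : Matrix (Fin ν) (Fin ν) ℂ :=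
    V * diagonal (fun i => ((max (lam i) 0 - lam i : ℝ) : ℂ)) * star V with hMm
  have hMpPSD : Mp.PosSemidef := by
    rw [hMp, Matrix.star_eq_conjTranspose]
    exact (Matrix.posSemidef_diagonal_iff.mpr fun i =>
      Complex.zero_le_real.mpr (le_max_right _ _)).mul_mul_conjTranspose_same V
  have hMmPSD : Mm.PosSemidef := by
    rw [hMm, Matrix.star_eq_conjTranspose]
    exact (Matrix.posSemidef_diagonal_iff.mpr fun i =>
      Complex.zero_le_real.mpr (by simp [sub_nonneg, le_max_left])).mul_mul_conjTranspose_same V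
  have hspec : M = V * diagonal (fun i => ((lam i : ℝ) : ℂ)) * star V := by
    rw [hM.spectral_theorem, Unitary.conjStarAlgAut_apply] <;> rfl
  have hM0 : A - B = Mp - Mm := by
    rw [hMp, hMm, ← Matrix.sub_mul, ← Matrix.mul_sub, Matrix.diagonal_sub]
    rw [← hMdef, hspec]
    congr 1
    congr 1
    funext i
    push_cast
    ring_nf
  have hBMp : (B + Mp).IsHermitian := hB.add hMpPSD.isHermitian
  have h1 : ∀ k, eigs hA k ≤ eigs hBMp k := by
    intro k
    refine eigs_le_eigs hA hBMp ?_ k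
    have he : B + Mp - A = Mm := by
      have e1 : B + Mp - A = Mp - (A - B) := by abel
      rw [e1, hM0]
      abel
    rwa [he]
  have h2 : ∀ k, eigs hB k ≤ eigs hBMp k := by
    intro k
    refine eigs_le_eigs hB hBMp ?_ k
    have he : B + Mp - B = Mp := by abel
    rwa [he]
  -- trace identities
  have htrMp : Mp.trace = ((∑ i, max (lam i) 0 : ℝ) : ℂ) := by
    rw [hMp, trace_VDV _ (star_mul_self_eigenvectorUnitary hM)]
    push_cast
    rfl
  have htrM : M.trace = ((∑ i, lam i : ℝ) : ℂ) := by
    rw [hspec, trace_VDV _ (star_mul_self_eigenvectorUnitary hM)]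
    push_cast
    rfl
  have hsum1 : (∑ i, hBMp.eigenvalues i) = (∑ i, hB.eigenvalues i) + ∑ i, max (lam i) 0 := by
    apply Complex.ofReal_inj.mp
    rw [Complex.ofReal_add, ← trace_re_eq_sum_eigenvalues hBMp,
      ← trace_re_eq_sum_eigenvalues hB, ← htrMp]
    exact Matrix.trace_add _ _
  have hsum2 : (∑ i, hA.eigenvalues i) - (∑ i, hB.eigenvalues i) = ∑ i, lam i := by
    apply Complex.ofReal_inj.mp
    rw [Complex.ofReal_sub, ← trace_re_eq_sum_eigenvalues hA,
      ← trace_re_eq_sum_eigenvalues hB, ← htrM]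
    exact (Matrix.trace_sub _ _).symm
  calc (∑ k, |eigs hA k - eigs hB k|)
      ≤ ∑ k, ((eigs hBMp k - eigs hA k) + (eigs hBMp k - eigs hB k)) := by
        refine Finset.sum_le_sum fun k _ => ?_
        have ha := h1 k
        have hb := h2 k
        rw [abs_le]
        constructor <;> linarith
    _ = 2 * (∑ k, eigs hBMp k) - (∑ k, eigs hA k) - (∑ k, eigs hB k) := by
        rw [Finset.sum_add_distrib, Finset.sum_sub_distrib, Finset.sum_sub_distrib]
        ring
    _ = ∑ i, |lam i| := by
        rw [sum_eigs_eq hBMp, sum_eigs_eq hA, sum_eigs_eq hB, hsum1]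
        rw [show (2 : ℝ) * ((∑ i, hB.eigenvalues i) + ∑ i, max (lam i) 0) -
            (∑ i, hA.eigenvalues i) - (∑ i, hB.eigenvalues i) =
            2 * (∑ i, max (lam i) 0) -
              ((∑ i, hA.eigenvalues i) - (∑ i, hB.eigenvalues i)) from by ring, hsum2]
        rw [Finset.mul_sum, ← Finset.sum_sub_distrib]
        refine Finset.sum_congr rfl fun i _ => ?_
        rcases le_total 0 (lam i) with h | h
        · rw [max_eq_left h, abs_of_nonneg h]; ring
        · rw [max_eq_right h, abs_of_nonpos h]; ring
    _ ≤ ∑ j, ∑ k, ‖M j k‖ := sum_abs_eigenvalues_le hM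
    _ = ∑ j, ∑ k, ‖A j k - B j k‖ := by
        refine Finset.sum_congr rfl fun j _ => Finset.sum_congr rfl fun k _ => ?_
        rw [hMdef, Matrix.sub_apply]
end keypart

/-- stability estimates. With `P, R` (resp. `P′, R′`) the fiber matrices
at the lower and upper quasimomenta of two operators, and `C` the sum of the entrywise
`ℓ¹`-distances, both the variation of the gap data and of the band lengths are `≤ 2C`. -/
theorem stability_estimates (ν : ℕ) (hν : 1 ≤ ν)
    (P R P' R' : Matrix (Fin ν) (Fin ν) ℂ)
    (hP : P.IsHermitian) (hR : R.IsHermitian)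
    (hP' : P'.IsHermitian) (hR' : R'.IsHermitian)
    (C : ℝ)
    (hC : C = (∑ j : Fin ν, ∑ k : Fin ν, ‖P j k - P' j k‖) +
        ∑ j : Fin ν, ∑ k : Fin ν, ‖R j k - R' j k‖) :
    (|eigs hP ⟨0, by omega⟩ - eigs hP' ⟨0, by omega⟩| +
        |eigs hR ⟨ν - 1, by omega⟩ - eigs hR' ⟨ν - 1, by omega⟩| +
        ∑ n : Fin (ν - 1),
          |(eigs hP ⟨(n : ℕ) + 1, by omega⟩ - eigs hR ⟨(n : ℕ), by omega⟩) -
            (eigs hP' ⟨(n : ℕ) + 1, by omega⟩ - eigs hR' ⟨(n : ℕ), by omega⟩)| ≤ 2 * C) ∧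
    (∑ n : Fin ν, |(eigs hR n - eigs hP n) - (eigs hR' n - eigs hP' n)| ≤ 2 * C) := by
  obtain ⟨m, rfl⟩ : ∃ m, ν = m + 1 := ⟨ν - 1, by omega⟩
  have hKP := key hP hP'
  have hKR := key hR hR'
  have hCP : (0 : ℝ) ≤ ∑ j, ∑ k, ‖P j k - P' j k‖ :=
    Finset.sum_nonneg fun j _ => Finset.sum_nonneg fun k _ => norm_nonneg _
  have hCR : (0 : ℝ) ≤ ∑ j, ∑ k, ‖R j k - R' j k‖ :=
    Finset.sum_nonneg fun j _ => Finset.sum_nonneg fun k _ => norm_nonneg _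
  set ΔP : Fin (m + 1) → ℝ := fun k => |eigs hP k - eigs hP' k| with hΔP
  set ΔR : Fin (m + 1) → ℝ := fun k => |eigs hR k - eigs hR' k| with hΔR
  constructor
  · -- gap estimate
    have hsplit : ∀ n : Fin m,
        |(eigs hP ⟨(n : ℕ) + 1, by omega⟩ - eigs hR ⟨(n : ℕ), by omega⟩) -
          (eigs hP' ⟨(n : ℕ) + 1, by omega⟩ - eigs hR' ⟨(n : ℕ), by omega⟩)| ≤
          ΔP ⟨(n : ℕ) + 1, by omega⟩ + ΔR ⟨(n : ℕ), by omega⟩ := by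
      intro n
      rw [hΔP, hΔR]
      have := abs_sub (eigs hP ⟨(n : ℕ) + 1, by omega⟩ - eigs hP' ⟨(n : ℕ) + 1, by omega⟩)
        (eigs hR ⟨(n : ℕ), by omega⟩ - eigs hR' ⟨(n : ℕ), by omega⟩)
      calc |(eigs hP ⟨(n : ℕ) + 1, by omega⟩ - eigs hR ⟨(n : ℕ), by omega⟩) -
          (eigs hP' ⟨(n : ℕ) + 1, by omega⟩ - eigs hR' ⟨(n : ℕ), by omega⟩)|
          = |(eigs hP ⟨(n : ℕ) + 1, by omega⟩ - eigs hP' ⟨(n : ℕ) + 1, by omega⟩) -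
            (eigs hR ⟨(n : ℕ), by omega⟩ - eigs hR' ⟨(n : ℕ), by omega⟩)| := by ring_nf
        _ ≤ _ := abs_sub _ _
    have hsum1 : (ΔP ⟨0, by omega⟩ + ∑ n : Fin m, ΔP ⟨(n : ℕ) + 1, by omega⟩) =
        ∑ k : Fin (m + 1), ΔP k := by
      rw [Fin.sum_univ_succ]
      rfl
    have hsum2 : (∑ n : Fin m, ΔR ⟨(n : ℕ), by omega⟩ + ΔR ⟨m, by omega⟩) =
        ∑ k : Fin (m + 1), ΔR k := by
      rw [Fin.sum_univ_castSucc]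
      rfl
    calc |eigs hP ⟨0, by omega⟩ - eigs hP' ⟨0, by omega⟩| +
        |eigs hR ⟨m + 1 - 1, by omega⟩ - eigs hR' ⟨m + 1 - 1, by omega⟩| +
        ∑ n : Fin (m + 1 - 1),
          |(eigs hP ⟨(n : ℕ) + 1, by omega⟩ - eigs hR ⟨(n : ℕ), by omega⟩) -
            (eigs hP' ⟨(n : ℕ) + 1, by omega⟩ - eigs hR' ⟨(n : ℕ), by omega⟩)|
        ≤ ΔP ⟨0, by omega⟩ + ΔR ⟨m, by omega⟩ +
          ∑ n : Fin m, (ΔP ⟨(n : ℕ) + 1, by omega⟩ + ΔR ⟨(n : ℕ), by omega⟩) := by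
          refine add_le_add (le_of_eq rfl) (Finset.sum_le_sum fun n _ => hsplit n)
      _ = (ΔP ⟨0, by omega⟩ + ∑ n : Fin m, ΔP ⟨(n : ℕ) + 1, by omega⟩) +
          (∑ n : Fin m, ΔR ⟨(n : ℕ), by omega⟩ + ΔR ⟨m, by omega⟩) := by
          rw [Finset.sum_add_distrib]; ring
      _ = (∑ k : Fin (m + 1), ΔP k) + ∑ k : Fin (m + 1), ΔR k := by rw [hsum1, hsum2]
      _ ≤ (∑ j, ∑ k, ‖P j k - P' j k‖) +
          ∑ j, ∑ k, ‖R j k - R' j k‖ := add_le_add hKP hKR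
      _ = C := hC.symm
      _ ≤ 2 * C := by rw [hC]; linarith
  · calc ∑ n : Fin (m + 1), |(eigs hR n - eigs hP n) - (eigs hR' n - eigs hP' n)|
        ≤ ∑ n : Fin (m + 1), (ΔR n + ΔP n) := by
          refine Finset.sum_le_sum fun n _ => ?_
          calc |(eigs hR n - eigs hP n) - (eigs hR' n - eigs hP' n)|
              = |(eigs hR n - eigs hR' n) - (eigs hP n - eigs hP' n)| := by ring_nf
            _ ≤ ΔR n + ΔP n := abs_sub _ _
      _ = (∑ n : Fin (m + 1), ΔR n) + ∑ n : Fin (m + 1), ΔP n := Finset.sum_add_distrib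
      _ ≤ (∑ j, ∑ k, ‖R j k - R' j k‖) +
          ∑ j, ∑ k, ‖P j k - P' j k‖ := add_le_add hKR hKP
      _ = C := by rw [hC]; ring
      _ ≤ 2 * C := by rw [hC]; linarith
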